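/- Let A be a finite nonempty set, w : A → ℝ weights with w(a) ≥ 0 for all a and Σ_a w(a) = 1, and f : A → ℝ. Let m : (0,1) → ℝ be such that m(τ) is the τ-expectile of f under w for each τ ∈ (0,1). Then m(τ) tends to max{f(a) : w(a) > 0} as τ tends to 1 from the left. -/
import Mathlib


open Finset Filter

/-- `m` is the `τ`-expectile of the values `f` under the weights `w`. -/
def IsExpectile {A : Type*} [Fintype A] (τ : ℝ) (w f : A → ℝ) (m : ℝ) : Prop :=
  τ * ∑ a, w a * max (f a - m) 0 = (1 - τ) * ∑ a, w a * max (m - f a) 0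

/-- If `m τ` is the `τ`-expectile of `f` under `w` for each
`τ ∈ (0,1)`, then `m τ` tends to `max {f a : w a > 0}` as `τ → 1⁻`. -/
theorem finite_expectile_tendsto_max_on_support
    {A : Type*} [Fintype A] [Nonempty A]
    (w : A → ℝ) (hw : ∀ a, 0 ≤ w a) (hsum : ∑ a, w a = 1)
    (f : A → ℝ) (m : ℝ → ℝ)
    (hm : ∀ τ ∈ Set.Ioo (0 : ℝ) 1, IsExpectile τ w f (m τ)) :
    Tendsto m (nhdsWithin 1 (Set.Iio 1)) (nhds (sSup (f '' {a | 0 < w a}))) := by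
  classical
  set S : Finset A := Finset.univ.filter (fun a => 0 < w a) with hS_def
  have hS : S.Nonempty := by
    by_contra h
    rw [Finset.not_nonempty_iff_eq_empty] at h
    have h0 : ∀ a, w a = 0 := by
      intro a
      by_contra ha
      have haS : a ∈ S := by
        simp only [hS_def, Finset.mem_filter, Finset.mem_univ, true_and]
        exact lt_of_le_of_ne (hw a) (Ne.symm ha)
      simp [h] at haS
    simp [h0] at hsum
  set M := S.sup' hS f with hM_def
  have hMs : sSup (f '' {a | 0 < w a}) = M := by
    have hset : ({a | 0 < w a} : Set A) = ↑S := by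
      ext a; simp [hS_def]
    rw [hset, hM_def, Finset.sup'_eq_csSup_image]
  obtain ⟨a₀, ha₀S, hfa₀⟩ := Finset.exists_mem_eq_sup' hS f
  have hwa₀ : 0 < w a₀ := by
    have := ha₀S
    simp only [hS_def, Finset.mem_filter, Finset.mem_univ, true_and] at this
    exact this
  have hfle : ∀ a, 0 < w a → f a ≤ M := by
    intro a ha
    exact Finset.le_sup' f (by simp [hS_def, ha])
  set c := S.inf' hS f with hc_def
  have hcfa : ∀ a, 0 < w a → c ≤ f a := by
    intro a ha
    exact Finset.inf'_le f (by simp [hS_def, ha])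
  have hcM : c ≤ M := le_trans (hcfa a₀ hwa₀) (hfa₀ ▸ le_refl _)
  -- upper bound
  have upper : ∀ τ ∈ Set.Ioo (0:ℝ) 1, m τ ≤ M := by
    intro τ hτ
    by_contra hgt
    push_neg at hgt
    have hexp := hm τ hτ
    unfold IsExpectile at hexp
    have hL : ∑ a, w a * max (f a - m τ) 0 = 0 := by
      apply Finset.sum_eq_zero; intro a _
      rcases eq_or_lt_of_le (hw a) with h | h
      · simp [← h]
      · have hle : f a - m τ ≤ 0 := by
          have := hfle a h; linarith
        simp [max_eq_right hle]
    have hR : 0 < ∑ a, w a * max (m τ - f a) 0 := by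
      apply Finset.sum_pos' (fun a _ => mul_nonneg (hw a) (le_max_right _ _))
      refine ⟨a₀, Finset.mem_univ _, ?_⟩
      have hpos : 0 < m τ - f a₀ := by rw [← hfa₀]; linarith
      have : max (m τ - f a₀) 0 = m τ - f a₀ := max_eq_left hpos.le
      rw [this]
      exact mul_pos hwa₀ hpos
    have h1 : (0:ℝ) < (1 - τ) * ∑ a, w a * max (m τ - f a) 0 :=
      mul_pos (by linarith [hτ.2]) hR
    rw [hL, mul_zero] at hexp
    linarith
  -- lower bound
  have lower : ∀ τ ∈ Set.Ioo (0:ℝ) 1,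
      M - (1 - τ) * (M - c) / (τ * w a₀) ≤ m τ := by
    intro τ hτ
    have hexp := hm τ hτ
    unfold IsExpectile at hexp
    have hub := upper τ hτ
    have hpos : 0 < τ * w a₀ := mul_pos hτ.1 hwa₀
    have hsingle : w a₀ * max (M - m τ) 0 ≤ ∑ a, w a * max (f a - m τ) 0 := by
      have := Finset.single_le_sum
        (f := fun a => w a * max (f a - m τ) 0)
        (fun a _ => mul_nonneg (hw a) (le_max_right _ _)) (Finset.mem_univ a₀)
      rw [hM_def, hfa₀]
      exact this
    have h2 : ∑ a, w a * max (m τ - f a) 0 ≤ M - c := by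
      calc ∑ a, w a * max (m τ - f a) 0 ≤ ∑ a, w a * (M - c) := by
            apply Finset.sum_le_sum
            intro a _
            rcases eq_or_lt_of_le (hw a) with h | h
            · simp [← h]
            · apply mul_le_mul_of_nonneg_left _ (hw a)
              apply max_le
              · have := hcfa a h; linarith
              · linarith
        _ = M - c := by rw [← Finset.sum_mul, hsum, one_mul]
    have hkey : τ * (w a₀ * max (M - m τ) 0) ≤ (1 - τ) * (M - c) := by
      have hA : τ * (w a₀ * max (M - m τ) 0) ≤ τ * ∑ a, w a * max (f a - m τ) 0 :=
        mul_le_mul_of_nonneg_left hsingle hτ.1.le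
      have hB : (1 - τ) * ∑ a, w a * max (m τ - f a) 0 ≤ (1 - τ) * (M - c) :=
        mul_le_mul_of_nonneg_left h2 (by linarith [hτ.2])
      linarith
    have hmax : max (M - m τ) 0 ≤ (1 - τ) * (M - c) / (τ * w a₀) := by
      rw [le_div_iff₀ hpos]
      nlinarith [hkey]
    have := le_max_left (M - m τ) (0:ℝ)
    linarith
  rw [hMs]
  have hmem : Set.Ioo (0:ℝ) 1 ∈ nhdsWithin (1:ℝ) (Set.Iio 1) :=
    Ioo_mem_nhdsLT_of_mem (by norm_num : (1:ℝ) ∈ Set.Ioc (0:ℝ) 1)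
  apply tendsto_of_tendsto_of_tendsto_of_le_of_le'
    (g := fun τ : ℝ => M - (1 - τ) * (M - c) / (τ * w a₀)) (h := fun _ => M)
  · have hcont : ContinuousAt (fun τ : ℝ => M - (1 - τ) * (M - c) / (τ * w a₀)) 1 := by
      apply ContinuousAt.sub continuousAt_const
      apply ContinuousAt.div
      · fun_prop
      · fun_prop
      · simp [hwa₀.ne']
    have h := hcont.tendsto.mono_left (nhdsWithin_le_nhds (s := Set.Iio (1:ℝ)))
    simpa using h
  · exact tendsto_const_nhds
  · filter_upwards [hmem] with τ hτ using lower τ hτ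
  · filter_upwards [hmem] with τ hτ using upper τ hτ
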